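/- Bipartite similarity of the Hodge and sign-less Hodge Laplacians: suppose G is bipartite (2-colorable) and an orientation of the edges is given by maps h, t : E(G) → V with, for each edge f, the endpoint set of f equal to {h(f), t(f)} and h(f) ≠ t(f). Define the signed incidence matrix d as the S×S integer matrix whose only nonzero entries are d(f, h(f)) = 1 and d(f, t(f)) = −1 for each edge f, and set H = (d + dᵀ)². Then H and |H| have the same characteristic polynomial. -/

import Mathlib

/-!
A proper 2-coloring `c` of `G` gives every vertex a sign `±1`; give an edge the sign of its
head. Since the tail of an edge has the opposite sign, conjugating the signed incidence matrix
`d` by the diagonal matrix `D` of these signs flips exactly the `-1` entries, so `D d D = |d|`.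
As `D` is diagonal with `D² = 1`, conjugation by `D` commutes with transposition and squaring,
hence `D H D = |H|` and the two Laplacians are similar.
-/

open Matrix

variable {V : Type*} [Fintype V] [DecidableEq V]

/-- The simplices of the 1-dimensional simplicial complex of a graph: vertices and edges. -/
abbrev Simplex (G : SimpleGraph V) [DecidableRel G.Adj] := V ⊕ G.edgeSet

variable (G : SimpleGraph V) [DecidableRel G.Adj]

/-- The vertex set of a simplex. -/
def sVerts : Simplex G → Set V
  | Sum.inl u => {u}
  | Sum.inr f => {w | w ∈ (f : Sym2 V)}

instance (x : Simplex G) (w : V) : Decidable (w ∈ sVerts G x) :=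
  match x with
  | Sum.inl u => decidable_of_iff (w = u) (by simp [sVerts])
  | Sum.inr f => decidable_of_iff (w ∈ (f : Sym2 V)) (by simp [sVerts])

/-- Two simplices touch if their vertex sets intersect. -/
def touches (x y : Simplex G) : Prop := ∃ w, w ∈ sVerts G x ∧ w ∈ sVerts G y

instance : DecidableRel (touches G) := fun _ _ => Fintype.decidableExistsFintype

/-- The connection Laplacian. -/
def connL : Matrix (Simplex G) (Simplex G) ℤ :=
  Matrix.of fun x y => if touches G x y then 1 else 0

/-- The sign-less incidence matrix. -/
def absd : Matrix (Simplex G) (Simplex G) ℤ :=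
  Matrix.of fun a b =>
    match a, b with
    | Sum.inr f, Sum.inl u => if u ∈ (f : Sym2 V) then 1 else 0
    | _, _ => 0

/-- The sign-less Hodge Laplacian. -/
def absH : Matrix (Simplex G) (Simplex G) ℤ := (absd G + (absd G)ᵀ) ^ 2

/-- The signed incidence matrix for an orientation given by head and tail maps. -/
def signedD (eh et : G.edgeSet → V) : Matrix (Simplex G) (Simplex G) ℤ :=
  Matrix.of fun a b =>
    match a, b with
    | Sum.inr f, Sum.inl u => if u = eh f then 1 else if u = et f then -1 else 0
    | _, _ => 0

namespace Matrix

variable {n R : Type*} [Fintype n] [DecidableEq n] [CommRing R]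

theorem charpoly_pow_conj_of_mul_self_eq_one {D : Matrix n n R} (hD : D * D = 1)
    (A : Matrix n n R) (k : ℕ) : ((D * A * D) ^ k).charpoly = (A ^ k).charpoly := by
  have hpow : (D * A * D) ^ k = D * A ^ k * D := Units.conj_pow ⟨D, D, hD, hD⟩ A k
  rw [hpow, charpoly_mul_comm, ← mul_assoc, hD, one_mul]

end Matrix

namespace SimpleGraph.Coloring

variable {W : Type*} {H : SimpleGraph W} (c : H.Coloring (Fin 2))

def sign (u : W) : ℤ := if c u = 0 then 1 else -1

theorem sign_mul_self (u : W) : c.sign u * c.sign u = 1 := by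
  unfold sign; split_ifs <;> rfl

theorem sign_mul_sign_of_adj {u w : W} (h : H.Adj u w) : c.sign u * c.sign w = -1 := by
  have hne := c.valid h
  unfold sign
  split_ifs with hu hw hw
  · exact absurd (hu.trans hw.symm) hne
  · rfl
  · rfl
  · exact absurd ((Fin.eq_one_of_ne_zero _ hu).trans (Fin.eq_one_of_ne_zero _ hw).symm) hne

theorem sign_mul_orientedIncidence_mul_sign [DecidableEq W] {eh et : H.edgeSet → W}
    {f : H.edgeSet} (hf : (f : Sym2 W) = s(eh f, et f)) (u : W) :
    c.sign (eh f) * (if u = eh f then 1 else if u = et f then -1 else 0) * c.sign u =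
      if u ∈ (f : Sym2 W) then 1 else 0 := by
  have hadj : H.Adj (eh f) (et f) := by simpa [hf] using f.2
  have hmem : u ∈ (f : Sym2 W) ↔ u = eh f ∨ u = et f := by rw [hf, Sym2.mem_iff]
  by_cases hh : u = eh f
  · subst hh
    simpa [hmem] using c.sign_mul_self _
  · by_cases ht : u = et f
    · subst ht
      simp [hh, hmem, c.sign_mul_sign_of_adj hadj]
    · simp [hh, ht, hmem]

end SimpleGraph.Coloring

variable {G}

def simplexSign (c : G.Coloring (Fin 2)) (eh : G.edgeSet → V) : Simplex G → ℤ
  | Sum.inl u => c.sign u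
  | Sum.inr f => c.sign (eh f)

theorem diagonal_simplexSign_mul_self (c : G.Coloring (Fin 2)) (eh : G.edgeSet → V) :
    diagonal (simplexSign c eh) * diagonal (simplexSign c eh) = 1 := by
  rw [diagonal_mul_diagonal, ← diagonal_one]
  congr 1
  funext x
  cases x with
  | inl u => exact c.sign_mul_self u
  | inr f => exact c.sign_mul_self (eh f)

theorem simplexSign_conj_signedD (c : G.Coloring (Fin 2)) {eh et : G.edgeSet → V}
    (hor : ∀ f : G.edgeSet, (f : Sym2 V) = s(eh f, et f)) :
    diagonal (simplexSign c eh) * signedD G eh et * diagonal (simplexSign c eh) = absd G := by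
  ext a b
  rw [mul_diagonal, diagonal_mul]
  rcases a with u | f <;> rcases b with w | g
  · simp [signedD, absd]
  · simp [signedD, absd]
  · exact c.sign_mul_orientedIncidence_mul_sign (hor f) w
  · simp [signedD, absd]

theorem simplexSign_conj_signedD_add_transpose (c : G.Coloring (Fin 2))
    {eh et : G.edgeSet → V} (hor : ∀ f : G.edgeSet, (f : Sym2 V) = s(eh f, et f)) :
    diagonal (simplexSign c eh) * (signedD G eh et + (signedD G eh et)ᵀ) *
        diagonal (simplexSign c eh) = absd G + (absd G)ᵀ := by
  set D := diagonal (simplexSign c eh)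
  have hconj : D * signedD G eh et * D = absd G := simplexSign_conj_signedD c hor
  have htranspose : D * (signedD G eh et)ᵀ * D = (D * signedD G eh et * D)ᵀ := by
    rw [transpose_mul, transpose_mul, diagonal_transpose, Matrix.mul_assoc]
  rw [mul_add, add_mul, htranspose, hconj]

theorem bipartite_hodge_similar (hb : G.Colorable 2) (eh et : G.edgeSet → V)
    (hor : ∀ f : G.edgeSet, (f : Sym2 V) = s(eh f, et f) ∧ eh f ≠ et f) :
    ((signedD G eh et + (signedD G eh et)ᵀ) ^ 2).charpoly = (absH G).charpoly := by
  obtain ⟨c⟩ := hb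
  rw [absH, ← simplexSign_conj_signedD_add_transpose c fun f => (hor f).1,
    charpoly_pow_conj_of_mul_self_eq_one (diagonal_simplexSign_mul_self c eh)]
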